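/- Fix integers ν ≥ 1 and r ≥ 1. There is a constant c(ν, r) such that for all sufficiently large H, ∑_{D ⊆ [1,H], |D| = ν} 𝔖(D ∪ {0})^r ≤ c(ν, r)·H^ν, where the sum runs over all ν-element subsets D of {1, …, H} (with the convention 𝔖(S) = 0 for inadmissible S). -/

import Mathlib

open scoped Classical

/-- `nuP p H` is the number of distinct residue classes modulo `p`
occupied by the elements of the finite set `H` of integers. -/
def nuP (p : ℕ) (H : Finset ℤ) : ℕ :=
  (H.image (fun x : ℤ => (x : ZMod p))).card

/-- `H` is admissible if it misses a residue class modulo every prime. -/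
def Admissible (H : Finset ℤ) : Prop :=
  ∀ p : ℕ, p.Prime → nuP p H < p

/-- The singular series `𝔖(H) = ∏_p (1 - ν_p(H)/p)(1 - 1/p)^{-|H|}`,
defined to be `0` for inadmissible `H`. -/
noncomputable def singSeries (H : Finset ℤ) : ℝ :=
  if Admissible H then
    ∏' p : Nat.Primes, (1 - (nuP p H : ℝ) / (p : ℕ)) * ((1 - ((p : ℕ) : ℝ)⁻¹)⁻¹) ^ H.card
  else 0

/-!
Every local factor of `𝔖(S)` is at most `(1 - 1/p)^{-|S|} ≤ (1 + 2/p)^{|S|}`, and at most `1`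
unless `p` divides a difference `y - x` of two elements of `S`. Hence `𝔖(S)` is bounded by a
product, over the at most `|S|^2` pairs `x < y`, of `∏_{p ∣ y - x} (1 + 2/p)^{|S|}`; bounding a
product of numbers `≥ 1` by its largest factor to the power `|S|^2` turns `𝔖(S)^r` into a sum over
the pairs of `g(y - x)`, where `g(n) = ∏_{p ∣ n} (1 + B/p)` and `B` depends only on `|S|` and `r`.
Expanding the product, `∑_{n ≤ H} g(n) ≤ H ∏_{m ≤ H} (1 + B/m^2) ≤ e^{Bπ^2/6} H`. Finally, a pair
`(0, y)` lies in at most `H^{ν-1}` of the sets `{0} ∪ D`, and a pair `(x, y)` with `x ≥ 1` in at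
most `H^{ν-2}` of them, which gives the bound `O(H^ν)`.
-/

open Finset

lemma one_sub_inv_pos {x : ℝ} (hx : 1 < x) : 0 < 1 - x⁻¹ :=
  sub_pos.2 (inv_lt_one_of_one_lt₀ hx)

lemma inv_one_sub_inv_le_one_add_two_div {x : ℝ} (hx : 2 ≤ x) : (1 - x⁻¹)⁻¹ ≤ 1 + 2 / x := by
  have hx0 : 0 < x := by linarith
  rw [inv_le_iff_one_le_mul₀ (one_sub_inv_pos (by linarith))]
  have : (1 + 2 / x) * (1 - x⁻¹) = 1 + (x - 2) / x ^ 2 := by field_simp; ring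
  rw [this]
  have : 0 ≤ (x - 2) / x ^ 2 := div_nonneg (by linarith) (by positivity)
  linarith

lemma one_le_one_add_two_div_pow (p k : ℕ) : 1 ≤ (1 + 2 / (p : ℝ)) ^ k :=
  one_le_pow₀ (le_add_of_nonneg_right (by positivity))

lemma one_add_pow_le_one_add_two_pow_mul {x : ℝ} (hx₀ : 0 ≤ x) (hx₁ : x ≤ 1) (n : ℕ) :
    (1 + x) ^ n ≤ 1 + 2 ^ n * x := by
  suffices h : (1 + x) ^ n ≤ 1 + (2 ^ n - 1) * x by nlinarith
  induction n with
  | zero => simp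
  | succ n ih =>
    have h2 : (1 : ℝ) ≤ 2 ^ n := one_le_pow₀ (by norm_num)
    have h := mul_le_mul_of_nonneg_right ih (by linarith : 0 ≤ 1 + x)
    rw [pow_succ, pow_succ]
    nlinarith [mul_nonneg (sub_nonneg.2 h2) (mul_nonneg hx₀ (sub_nonneg.2 hx₁))]

lemma Finset.prod_le_sum_pow_of_card_le {ι : Type*} {s : Finset ι} {f : ι → ℝ} {n : ℕ}
    (hs : s.Nonempty) (hf : ∀ i ∈ s, 1 ≤ f i) (hn : #s ≤ n) :
    ∏ i ∈ s, f i ≤ ∑ i ∈ s, f i ^ n := by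
  obtain ⟨i, hi, hmax⟩ := s.exists_max_image f hs
  calc ∏ j ∈ s, f j ≤ ∏ _j ∈ s, f i :=
        prod_le_prod (fun j hj => zero_le_one.trans (hf j hj)) hmax
    _ = f i ^ #s := prod_const _
    _ ≤ f i ^ n := pow_le_pow_right₀ (hf i hi) hn
    _ ≤ ∑ j ∈ s, f j ^ n :=
        single_le_sum (fun j hj => pow_nonneg (zero_le_one.trans (hf j hj)) n) hi

lemma Finset.prod_biUnion_le_prod_prod {ι α : Type*} [DecidableEq α] (s : Finset ι)
    (t : ι → Finset α) {f : α → ℝ} (hf : ∀ a, 1 ≤ f a) :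
    ∏ a ∈ s.biUnion t, f a ≤ ∏ i ∈ s, ∏ a ∈ t i, f a := by
  induction s using Finset.induction_on with
  | empty => simp
  | insert i s hi ih =>
    have hprod_one_le : ∀ u : Finset α, 1 ≤ ∏ a ∈ u, f a := fun u => one_le_prod (fun a _ => hf a)
    rw [biUnion_insert, prod_insert hi]
    calc ∏ a ∈ t i ∪ s.biUnion t, f a
        ≤ (∏ a ∈ t i ∪ s.biUnion t, f a) * ∏ a ∈ t i ∩ s.biUnion t, f a :=
          le_mul_of_one_le_right (zero_le_one.trans (hprod_one_le _)) (hprod_one_le _)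
      _ = (∏ a ∈ t i, f a) * ∏ a ∈ s.biUnion t, f a := prod_union_inter
      _ ≤ (∏ a ∈ t i, f a) * ∏ j ∈ s, ∏ a ∈ t j, f a :=
          mul_le_mul_of_nonneg_left ih (zero_le_one.trans (hprod_one_le _))

/-- Multiplied out so that no truncated `ν - #A` appears: for `#A > ν` the count is `0`. -/
lemma Finset.card_pow_mul_card_filter_superset_le {α : Type*} [DecidableEq α] (U A : Finset α)
    (ν : ℕ) : #U ^ #A * #{D ∈ U.powersetCard ν | A ⊆ D} ≤ #U ^ ν := by
  by_cases hA : #A ≤ ν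
  · have hinj : #{D ∈ U.powersetCard ν | A ⊆ D} ≤ #(U.powersetCard (ν - #A)) := by
      refine card_le_card_of_injOn (· \ A) (fun D hD => ?_) fun D hD D' hD' h => ?_
      · obtain ⟨hD, hAD⟩ := mem_filter.1 hD
        obtain ⟨hDU, hDcard⟩ := mem_powersetCard.1 hD
        exact mem_powersetCard.2 ⟨sdiff_subset.trans hDU, by rw [card_sdiff_of_subset hAD, hDcard]⟩
      · rw [← sdiff_union_of_subset (mem_filter.1 hD).2,
          ← sdiff_union_of_subset (mem_filter.1 hD').2]
        exact congrArg (· ∪ A) h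
    calc #U ^ #A * #{D ∈ U.powersetCard ν | A ⊆ D} ≤ #U ^ #A * #U ^ (ν - #A) := by
          rw [card_powersetCard] at hinj
          exact Nat.mul_le_mul_left _ (hinj.trans (Nat.choose_le_pow _ _))
      _ = #U ^ ν := by rw [← pow_add, Nat.add_sub_cancel' hA]
  · rw [filter_false_of_mem fun D hD hAD =>
      hA ((card_le_card hAD).trans (mem_powersetCard.1 hD).2.le)]
    simp

lemma Finset.card_pow_mul_sum_powersetCard_sum_le {α β : Type*} [DecidableEq α] (U : Finset α)
    (ν j : ℕ) (I : Finset β) (A : β → Finset α) {f : β → ℝ} (hf : ∀ e ∈ I, 0 ≤ f e)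
    (hA : ∀ e ∈ I, #(A e) = j) :
    #U ^ j * ∑ D ∈ U.powersetCard ν, ∑ e ∈ I with A e ⊆ D, f e ≤ #U ^ ν * ∑ e ∈ I, f e := by
  rw [sum_comm' (t' := I) (s' := fun e => {D ∈ U.powersetCard ν | A e ⊆ D})
    fun D e => by simp only [mem_filter]; tauto, mul_sum, mul_sum]
  refine sum_le_sum fun e he => ?_
  rw [sum_const, nsmul_eq_mul, ← mul_assoc]
  refine mul_le_mul_of_nonneg_right ?_ (hf e he)
  rw [← hA e he]
  exact_mod_cast card_pow_mul_card_filter_superset_le U (A e) ν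

def ltPairs {α : Type*} [LinearOrder α] (S : Finset α) : Finset (α × α) :=
  {e ∈ S ×ˢ S | e.1 < e.2}

lemma mem_ltPairs {α : Type*} [LinearOrder α] {S : Finset α} {e : α × α} :
    e ∈ ltPairs S ↔ e.1 ∈ S ∧ e.2 ∈ S ∧ e.1 < e.2 := by
  simp [ltPairs, and_assoc]

lemma card_ltPairs_le {α : Type*} [LinearOrder α] (S : Finset α) : #(ltPairs S) ≤ #S ^ 2 :=
  (card_filter_le _ _).trans (by rw [card_product, sq])

lemma ltPairs_nonempty {α : Type*} [LinearOrder α] {S : Finset α} (hS : 2 ≤ #S) :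
    (ltPairs S).Nonempty := by
  obtain ⟨x, hx, y, hy, hxy⟩ := one_lt_card.1 hS
  rcases hxy.lt_or_gt with h | h
  · exact ⟨(x, y), mem_ltPairs.2 ⟨hx, hy, h⟩⟩
  · exact ⟨(y, x), mem_ltPairs.2 ⟨hy, hx, h⟩⟩

lemma filter_ltPairs_pair_subset {α : Type*} [LinearOrder α] {D U : Finset α} (hDU : D ⊆ U) :
    {e ∈ ltPairs U | {e.1, e.2} ⊆ D} = ltPairs D := by
  ext e
  simp only [mem_filter, mem_ltPairs, insert_subset_iff, singleton_subset_iff]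
  constructor
  · rintro ⟨⟨-, -, h12⟩, h1, h2⟩
    exact ⟨h1, h2, h12⟩
  · rintro ⟨h1, h2, h12⟩
    exact ⟨⟨hDU h1, hDU h2, h12⟩, h1, h2⟩

lemma sum_ltPairs_insert_le {α : Type*} [LinearOrder α] {a : α} {s : Finset α}
    (ha : ∀ y ∈ s, a < y) {f : α × α → ℝ} (hf : ∀ e, 0 ≤ f e) :
    ∑ e ∈ ltPairs (insert a s), f e ≤ ∑ y ∈ s, f (a, y) + ∑ e ∈ ltPairs s, f e := by
  have hsub : ltPairs (insert a s) ⊆ s.map ⟨Prod.mk a, Prod.mk_right_injective a⟩ ∪ ltPairs s := by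
    rintro ⟨x, y⟩ he
    obtain ⟨hx, hy, hxy⟩ := mem_ltPairs.1 he
    simp only [mem_insert] at hx hy
    rcases hy with rfl | hy
    · rcases hx with rfl | hx
      · exact absurd hxy (lt_irrefl _)
      · exact absurd (ha x hx) (not_lt.2 hxy.le)
    rcases hx with rfl | hx
    · exact mem_union_left _ (mem_map_of_mem _ hy)
    · exact mem_union_right _ (mem_ltPairs.2 ⟨hx, hy, hxy⟩)
  calc ∑ e ∈ ltPairs (insert a s), f e
      ≤ ∑ e ∈ s.map ⟨Prod.mk a, Prod.mk_right_injective a⟩ ∪ ltPairs s, f e :=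
        sum_le_sum_of_subset_of_nonneg hsub fun e _ _ => hf e
    _ ≤ ∑ e ∈ s.map ⟨Prod.mk a, Prod.mk_right_injective a⟩, f e + ∑ e ∈ ltPairs s, f e := by
        rw [← sum_union_inter]
        exact le_add_of_nonneg_right (sum_nonneg fun e _ => hf e)
    _ = _ := by rw [sum_map]; rfl

noncomputable def localFactor (S : Finset ℤ) (p : ℕ) : ℝ :=
  (1 - (nuP p S : ℝ) / p) * ((1 - (p : ℝ)⁻¹)⁻¹) ^ S.card

lemma nuP_le (S : Finset ℤ) {p : ℕ} (hp : p ≠ 0) : nuP p S ≤ p := by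
  have : NeZero p := ⟨hp⟩
  exact (card_le_univ _).trans (ZMod.card p).le

lemma nuP_eq_card_of_forall_not_dvd {S : Finset ℤ} {p : ℕ}
    (h : ∀ x ∈ S, ∀ y ∈ S, x < y → ¬ (p : ℤ) ∣ y - x) : nuP p S = #S := by
  refine card_image_iff.2 fun x hx y hy hxy => ?_
  have hdvd : ∀ {a b : ℤ}, (a : ZMod p) = b → (p : ℤ) ∣ b - a := fun hab =>
    (ZMod.intCast_eq_intCast_iff_dvd_sub _ _ _).1 hab
  rcases lt_trichotomy x y with hlt | heq | hgt
  · exact absurd (hdvd hxy) (h x hx y hy hlt)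
  · exact heq
  · exact absurd (hdvd hxy.symm) (h y hy x hx hgt)

section LocalFactor

variable (S : Finset ℤ) {p : ℕ}

lemma localFactor_nonneg (hp : p.Prime) : 0 ≤ localFactor S p := by
  have hp0 : (0 : ℝ) < p := by exact_mod_cast hp.pos
  have : (nuP p S : ℝ) / p ≤ 1 := (div_le_one hp0).2 (by exact_mod_cast nuP_le S hp.ne_zero)
  have hq : 0 < 1 - (p : ℝ)⁻¹ := one_sub_inv_pos (Nat.one_lt_cast.2 hp.one_lt)
  exact mul_nonneg (by linarith) (pow_nonneg (inv_pos.2 hq).le _)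

lemma localFactor_le_one (hp : p.Prime) (h : nuP p S = #S) : localFactor S p ≤ 1 := by
  have hq := one_sub_inv_pos (Nat.one_lt_cast.2 hp.one_lt)
  have hinv : (p : ℝ)⁻¹ ≤ 1 := inv_le_one_of_one_le₀ (by exact_mod_cast hp.one_lt.le)
  have bernoulli := one_add_mul_le_pow (a := -(p : ℝ)⁻¹) (by linarith) #S
  rw [localFactor, h, inv_pow, ← div_eq_mul_inv, div_le_one (pow_pos hq _)]
  simpa [div_eq_mul_inv, sub_eq_add_neg] using bernoulli

lemma localFactor_le_one_add_two_div_pow (hp : p.Prime) : localFactor S p ≤ (1 + 2 / p) ^ #S := by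
  have hq := (inv_pos.2 (one_sub_inv_pos (Nat.one_lt_cast.2 hp.one_lt))).le
  have : 0 ≤ (nuP p S : ℝ) / p := by positivity
  calc localFactor S p ≤ 1 * ((1 - (p : ℝ)⁻¹)⁻¹) ^ #S :=
        mul_le_mul_of_nonneg_right (by linarith) (pow_nonneg hq _)
    _ ≤ (1 + 2 / p) ^ #S := by
        rw [one_mul]
        exact pow_le_pow_left₀ hq
          (inv_one_sub_inv_le_one_add_two_div (by exact_mod_cast hp.two_le)) _

end LocalFactor

lemma singSeries_le_of_forall_prod_localFactor_le {S : Finset ℤ} {M : ℝ} (hM : 1 ≤ M)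
    (h : ∀ t : Finset ℕ, (∀ p ∈ t, p.Prime) → ∏ p ∈ t, localFactor S p ≤ M) :
    singSeries S ≤ M := by
  unfold singSeries
  split_ifs
  · change ∏' p : Nat.Primes, localFactor S p ≤ M
    by_cases hmul : Multipliable fun p : Nat.Primes => localFactor S p
    · refine le_of_tendsto' hmul.hasProd fun s => ?_
      have := h (s.map (⟨(↑), Nat.Primes.coe_nat_injective⟩ : Nat.Primes ↪ ℕ)) fun p hp => by
        obtain ⟨q, -, rfl⟩ := mem_map.1 hp
        exact q.2
      rwa [Finset.prod_map] at this
    · rwa [tprod_eq_one_of_not_multipliable hmul]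
  · linarith

lemma singSeries_nonneg (S : Finset ℤ) : 0 ≤ singSeries S := by
  unfold singSeries
  split_ifs
  · exact tprod_nonneg fun p => localFactor_nonneg S p.2
  · rfl

/-- Only primes dividing a difference of two elements of `S` have local factor exceeding `1`. -/
lemma prod_localFactor_le (S : Finset ℤ) {t : Finset ℕ} (ht : ∀ p ∈ t, p.Prime) :
    ∏ p ∈ t, localFactor S p ≤
      ∏ e ∈ ltPairs S, ∏ p ∈ (e.2 - e.1).natAbs.primeFactors, (1 + 2 / (p : ℝ)) ^ #S := by
  set U := (ltPairs S).biUnion fun e => (e.2 - e.1).natAbs.primeFactors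
  have hone_le : ∀ p : ℕ, 1 ≤ (1 + 2 / (p : ℝ)) ^ #S := fun p => one_le_one_add_two_div_pow p #S
  have hnonneg : ∀ p ∈ t, 0 ≤ localFactor S p := fun p hp => localFactor_nonneg S (ht p hp)
  have hgood : ∏ p ∈ t with p ∉ U, localFactor S p ≤ 1 := by
    refine prod_le_one (fun p hp => hnonneg p (mem_filter.1 hp).1) fun p hp => ?_
    obtain ⟨hpt, hpU⟩ := mem_filter.1 hp
    refine localFactor_le_one S (ht p hpt)
      (nuP_eq_card_of_forall_not_dvd fun x hx y hy hxy hdvd => ?_)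
    refine hpU (mem_biUnion.2 ⟨(x, y), mem_ltPairs.2 ⟨hx, hy, hxy⟩, ?_⟩)
    exact Nat.mem_primeFactors.2 ⟨ht p hpt, Int.natCast_dvd.1 hdvd, by omega⟩
  calc ∏ p ∈ t, localFactor S p
      = (∏ p ∈ t with p ∈ U, localFactor S p) * ∏ p ∈ t with p ∉ U, localFactor S p :=
        (prod_filter_mul_prod_filter_not t _ _).symm
    _ ≤ ∏ p ∈ t with p ∈ U, localFactor S p :=
        mul_le_of_le_one_right (prod_nonneg fun p hp => hnonneg p (mem_filter.1 hp).1) hgood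
    _ ≤ ∏ p ∈ t with p ∈ U, (1 + 2 / (p : ℝ)) ^ #S :=
        prod_le_prod (fun p hp => hnonneg p (mem_filter.1 hp).1)
          fun p hp => localFactor_le_one_add_two_div_pow S (ht p (mem_filter.1 hp).1)
    _ ≤ ∏ p ∈ U, (1 + 2 / (p : ℝ)) ^ #S :=
        prod_le_prod_of_subset_of_one_le (fun p hp => (mem_filter.1 hp).2)
          (fun p _ => zero_le_one.trans (hone_le p)) fun p _ _ => hone_le p
    _ ≤ _ := prod_biUnion_le_prod_prod _ _ hone_le

lemma singSeries_le_prod_ltPairs (S : Finset ℤ) :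
    singSeries S ≤
      ∏ e ∈ ltPairs S, ∏ p ∈ (e.2 - e.1).natAbs.primeFactors, (1 + 2 / (p : ℝ)) ^ #S :=
  singSeries_le_of_forall_prod_localFactor_le
    (one_le_prod fun _ _ => one_le_prod fun p _ => one_le_one_add_two_div_pow p #S)
    fun _ ht => prod_localFactor_le S ht

lemma singSeries_pow_le_sum_ltPairs {S : Finset ℤ} (hS : 2 ≤ #S) (r : ℕ) :
    singSeries S ^ r ≤ ∑ e ∈ ltPairs S,
      ∏ p ∈ (e.2 - e.1).natAbs.primeFactors, (1 + 2 ^ (#S ^ 3 * r + 1) / (p : ℝ)) := by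
  set W : ℤ × ℤ → ℝ := fun e => ∏ p ∈ (e.2 - e.1).natAbs.primeFactors, (1 + 2 / (p : ℝ)) ^ #S
  have hW : ∀ e, 1 ≤ W e ^ r := fun _ =>
    one_le_pow₀ (one_le_prod fun p _ => one_le_one_add_two_div_pow p #S)
  calc singSeries S ^ r ≤ (∏ e ∈ ltPairs S, W e) ^ r :=
        pow_le_pow_left₀ (singSeries_nonneg S) (singSeries_le_prod_ltPairs S) r
    _ = ∏ e ∈ ltPairs S, W e ^ r := (prod_pow _ _ _).symm
    _ ≤ ∑ e ∈ ltPairs S, (W e ^ r) ^ (#S ^ 2) :=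
        prod_le_sum_pow_of_card_le (ltPairs_nonempty hS) (fun e _ => hW e) (card_ltPairs_le S)
    _ ≤ _ := by
        refine sum_le_sum fun e _ => ?_
        rw [← pow_mul, ← prod_pow]
        refine prod_le_prod (fun p _ => by positivity) fun p hp => ?_
        have hp2 : (2 : ℝ) ≤ p := by exact_mod_cast (Nat.prime_of_mem_primeFactors hp).two_le
        have hx : 2 / (p : ℝ) ≤ 1 := (div_le_one (by linarith)).2 hp2
        calc ((1 + 2 / (p : ℝ)) ^ #S) ^ (r * #S ^ 2) = (1 + 2 / (p : ℝ)) ^ (#S ^ 3 * r) := by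
              rw [← pow_mul]; ring_nf
          _ ≤ 1 + 2 ^ (#S ^ 3 * r) * (2 / p) :=
              one_add_pow_le_one_add_two_pow_mul (by positivity) hx _
          _ = 1 + 2 ^ (#S ^ 3 * r + 1) / p := by ring

/-- The summand `∏_{p ∈ t} b p` of the expanded product occurs for the `≤ H / ∏ t` multiples of
`∏ t`. -/
lemma sum_prod_primeFactors_one_add_le {b : ℕ → ℝ} (hb : ∀ p, 0 ≤ b p) (H : ℕ) :
    ∑ n ∈ Icc 1 H, ∏ p ∈ n.primeFactors, (1 + b p) ≤ H * ∏ m ∈ Icc 1 H, (1 + b m / m) := by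
  have hsub : ∀ n ∈ Icc 1 H, ∀ t ∈ n.primeFactors.powerset,
      t ∈ {t ∈ (Icc 1 H).powerset | ∏ p ∈ t, p ∣ n} := by
    intro n hn t ht
    obtain ⟨hn1, hnH⟩ := mem_Icc.1 hn
    have htn := mem_powerset.1 ht
    refine mem_filter.2 ⟨mem_powerset.2 fun p hp => ?_, ?_⟩
    · have := Nat.le_of_mem_primeFactors (htn hp)
      exact mem_Icc.2 ⟨(Nat.prime_of_mem_primeFactors (htn hp)).one_lt.le, this.trans hnH⟩
    · exact (prod_dvd_prod_of_subset _ _ id htn).trans (Nat.prod_primeFactors_dvd n)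
  have hcount : ∀ q : ℕ, (#{n ∈ Icc 1 H | q ∣ n} : ℝ) ≤ H / q := fun q => by
    rw [← zero_add 1, Icc_add_one_left_eq_Ioc, Nat.Ioc_filter_dvd_card_eq_div]
    exact Nat.cast_div_le
  calc ∑ n ∈ Icc 1 H, ∏ p ∈ n.primeFactors, (1 + b p)
      = ∑ n ∈ Icc 1 H, ∑ t ∈ n.primeFactors.powerset, ∏ p ∈ t, b p :=
        sum_congr rfl fun n _ => prod_one_add _
    _ ≤ ∑ n ∈ Icc 1 H, ∑ t ∈ (Icc 1 H).powerset with ∏ p ∈ t, p ∣ n, ∏ p ∈ t, b p :=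
        sum_le_sum fun n hn => sum_le_sum_of_subset_of_nonneg (hsub n hn)
          fun t _ _ => prod_nonneg fun p _ => hb p
    _ = ∑ t ∈ (Icc 1 H).powerset, ∑ n ∈ Icc 1 H with ∏ p ∈ t, p ∣ n, ∏ p ∈ t, b p :=
        sum_comm' fun n t => by simp only [mem_filter]; tauto
    _ = ∑ t ∈ (Icc 1 H).powerset, #{n ∈ Icc 1 H | ∏ p ∈ t, p ∣ n} * ∏ p ∈ t, b p := by
        simp only [sum_const, nsmul_eq_mul]
    _ ≤ ∑ t ∈ (Icc 1 H).powerset, H / (∏ p ∈ t, p : ℕ) * ∏ p ∈ t, b p :=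
        sum_le_sum fun t _ => mul_le_mul_of_nonneg_right (hcount _) (prod_nonneg fun p _ => hb p)
    _ = H * ∏ m ∈ Icc 1 H, (1 + b m / m) := by
        rw [prod_one_add, mul_sum]
        refine sum_congr rfl fun t _ => ?_
        rw [prod_div_distrib, Nat.cast_prod]
        ring

lemma sum_prod_primeFactors_one_add_div_le {B : ℝ} (hB : 0 ≤ B) (H : ℕ) :
    ∑ n ∈ Icc 1 H, ∏ p ∈ n.primeFactors, (1 + B / p) ≤ Real.exp (B * (Real.pi ^ 2 / 6)) * H := by
  have hzeta : ∑ m ∈ Icc 1 H, 1 / (m : ℝ) ^ 2 ≤ Real.pi ^ 2 / 6 :=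
    sum_le_hasSum _ (fun _ _ => by positivity) hasSum_zeta_two
  calc ∑ n ∈ Icc 1 H, ∏ p ∈ n.primeFactors, (1 + B / p)
      ≤ H * ∏ m ∈ Icc 1 H, (1 + B / m / m) :=
        sum_prod_primeFactors_one_add_le (fun p => by positivity) H
    _ ≤ H * Real.exp (∑ m ∈ Icc 1 H, B / m / m) :=
        mul_le_mul_of_nonneg_left (Real.prod_one_add_le_exp_sum _ fun m => by positivity)
          (by positivity)
    _ ≤ H * Real.exp (B * (Real.pi ^ 2 / 6)) := by
        gcongr
        calc ∑ m ∈ Icc 1 H, B / m / m = B * ∑ m ∈ Icc 1 H, 1 / (m : ℝ) ^ 2 := by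
              rw [mul_sum]; exact sum_congr rfl fun m _ => by ring
          _ ≤ B * (Real.pi ^ 2 / 6) := mul_le_mul_of_nonneg_left hzeta hB
    _ = _ := mul_comm _ _

section Counting

variable {f : ℕ → ℝ} (H : ℕ)

lemma sum_Icc_filter_lt_natAbs_sub_le (hf : ∀ n, 0 ≤ f n) {x : ℤ} (hx : 0 ≤ x) :
    ∑ y ∈ Icc (1 : ℤ) H with x < y, f (y - x).natAbs ≤ ∑ n ∈ Icc 1 H, f n := by
  rw [← sum_image fun y hy y' hy' h => by
    have := (mem_filter.1 hy).2; have := (mem_filter.1 hy').2; omega]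
  refine sum_le_sum_of_subset_of_nonneg (fun n hn => ?_) fun n _ _ => hf n
  obtain ⟨y, hy, rfl⟩ := mem_image.1 hn
  obtain ⟨hyI, hxy⟩ := mem_filter.1 hy
  have := mem_Icc.1 hyI
  exact mem_Icc.2 ⟨by omega, by omega⟩

lemma sum_ltPairs_Icc_le (hf : ∀ n, 0 ≤ f n) :
    ∑ e ∈ ltPairs (Icc (1 : ℤ) H), f (e.2 - e.1).natAbs ≤ H * ∑ n ∈ Icc 1 H, f n := by
  calc ∑ e ∈ ltPairs (Icc (1 : ℤ) H), f (e.2 - e.1).natAbs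
      = ∑ x ∈ Icc (1 : ℤ) H, ∑ y ∈ Icc (1 : ℤ) H with x < y, f (y - x).natAbs := by
        rw [ltPairs, sum_filter, sum_product]
        simp only [sum_filter]
    _ ≤ ∑ _x ∈ Icc (1 : ℤ) H, ∑ n ∈ Icc 1 H, f n :=
        sum_le_sum fun x hx => sum_Icc_filter_lt_natAbs_sub_le H hf (by linarith [(mem_Icc.1 hx).1])
    _ = H * ∑ n ∈ Icc 1 H, f n := by simp

lemma mul_sum_powersetCard_sum_natAbs_le (hf : ∀ n, 0 ≤ f n) (ν : ℕ) :
    H * ∑ D ∈ (Icc (1 : ℤ) H).powersetCard ν, ∑ y ∈ D, f y.natAbs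
      ≤ H ^ ν * ∑ n ∈ Icc 1 H, f n := by
  set U := Icc (1 : ℤ) H
  have hU : #U = H := by simp [U]
  have := card_pow_mul_sum_powersetCard_sum_le U ν 1 U singleton
    (f := fun y => f y.natAbs) (fun _ _ => hf _) fun _ _ => card_singleton _
  rw [hU, pow_one] at this
  calc H * ∑ D ∈ U.powersetCard ν, ∑ y ∈ D, f y.natAbs
      = H * ∑ D ∈ U.powersetCard ν, ∑ y ∈ U with {y} ⊆ D, f y.natAbs := by
        congr 1
        refine sum_congr rfl fun D hD => sum_congr ?_ fun _ _ => rfl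
        simp only [singleton_subset_iff, filter_mem_eq_inter,
          inter_eq_right.2 (mem_powersetCard.1 hD).1]
    _ ≤ H ^ ν * ∑ y ∈ U, f y.natAbs := this
    _ ≤ H ^ ν * ∑ n ∈ Icc 1 H, f n := by
        gcongr
        have := sum_Icc_filter_lt_natAbs_sub_le H hf le_rfl
        rw [filter_true_of_mem (s := U) fun y hy => by linarith [(mem_Icc.1 hy).1]] at this
        simpa only [sub_zero] using this

lemma sq_mul_sum_powersetCard_sum_ltPairs_le (hf : ∀ n, 0 ≤ f n) (ν : ℕ) :
    H ^ 2 * ∑ D ∈ (Icc (1 : ℤ) H).powersetCard ν, ∑ e ∈ ltPairs D, f (e.2 - e.1).natAbs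
      ≤ H ^ ν * (H * ∑ n ∈ Icc 1 H, f n) := by
  set U := Icc (1 : ℤ) H
  have hU : #U = H := by simp [U]
  have := card_pow_mul_sum_powersetCard_sum_le U ν 2 (ltPairs U) (fun e => {e.1, e.2})
    (f := fun e => f (e.2 - e.1).natAbs) (fun _ _ => hf _)
    fun e he => card_pair (mem_ltPairs.1 he).2.2.ne
  rw [hU] at this
  calc H ^ 2 * ∑ D ∈ U.powersetCard ν, ∑ e ∈ ltPairs D, f (e.2 - e.1).natAbs
      = H ^ 2 * ∑ D ∈ U.powersetCard ν, ∑ e ∈ ltPairs U with {e.1, e.2} ⊆ D,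
          f (e.2 - e.1).natAbs := by
        congr 1
        refine sum_congr rfl fun D hD => sum_congr ?_ fun _ _ => rfl
        rw [filter_ltPairs_pair_subset (mem_powersetCard.1 hD).1]
    _ ≤ H ^ ν * ∑ e ∈ ltPairs U, f (e.2 - e.1).natAbs := this
    _ ≤ H ^ ν * (H * ∑ n ∈ Icc 1 H, f n) := by gcongr; exact sum_ltPairs_Icc_le H hf

lemma mul_sum_powersetCard_sum_ltPairs_insert_zero_le (hf : ∀ n, 0 ≤ f n) (ν : ℕ) :
    H * ∑ D ∈ (Icc (1 : ℤ) H).powersetCard ν, ∑ e ∈ ltPairs (insert 0 D), f (e.2 - e.1).natAbs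
      ≤ 2 * H ^ ν * ∑ n ∈ Icc 1 H, f n := by
  set U := Icc (1 : ℤ) H
  set G := ∑ n ∈ Icc 1 H, f n
  have hsplit : ∑ D ∈ U.powersetCard ν, ∑ e ∈ ltPairs (insert 0 D), f (e.2 - e.1).natAbs
      ≤ ∑ D ∈ U.powersetCard ν, ∑ y ∈ D, f y.natAbs
        + ∑ D ∈ U.powersetCard ν, ∑ e ∈ ltPairs D, f (e.2 - e.1).natAbs := by
    rw [← sum_add_distrib]
    refine sum_le_sum fun D hD => ?_
    have hpos : ∀ y ∈ D, (0 : ℤ) < y := fun y hy => by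
      linarith [(mem_Icc.1 ((mem_powersetCard.1 hD).1 hy)).1]
    simpa only [sub_zero] using
      sum_ltPairs_insert_le hpos (f := fun e => f (e.2 - e.1).natAbs) fun _ => hf _
  rcases Nat.eq_zero_or_pos H with rfl | hH
  · simp only [CharP.cast_eq_zero, zero_mul]
    exact mul_nonneg (by positivity) (sum_nonneg fun n _ => hf n)
  have hH' : (0 : ℝ) < H := by exact_mod_cast hH
  have hsingle := mul_sum_powersetCard_sum_natAbs_le H hf ν
  have hpairs := sq_mul_sum_powersetCard_sum_ltPairs_le H hf ν
  have hpairs' : H * ∑ D ∈ U.powersetCard ν, ∑ e ∈ ltPairs D, f (e.2 - e.1).natAbs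
      ≤ H ^ ν * G :=
    le_of_mul_le_mul_left (by nlinarith [hpairs]) hH'
  nlinarith [hsplit, hsingle, hpairs']

end Counting

theorem sum_singSeries_pow_le_general (ν r : ℕ) (hν : 1 ≤ ν) :
    ∃ c : ℝ, 0 < c ∧ ∃ H₀ : ℕ, ∀ H : ℕ, H₀ ≤ H →
      ∑ D ∈ (Finset.Icc (1 : ℤ) (H : ℤ)).powersetCard ν,
          (singSeries (insert 0 D)) ^ r ≤ c * (H : ℝ) ^ ν := by
  set B : ℝ := 2 ^ ((ν + 1) ^ 3 * r + 1)
  set g : ℕ → ℝ := fun n => ∏ p ∈ n.primeFactors, (1 + B / p)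
  refine ⟨2 * Real.exp (B * (Real.pi ^ 2 / 6)), by positivity, 1, fun H hH => ?_⟩
  have hg : ∀ n, 0 ≤ g n := fun n => prod_nonneg fun p _ => by positivity
  have hterm : ∀ D ∈ (Icc (1 : ℤ) H).powersetCard ν,
      singSeries (insert 0 D) ^ r ≤ ∑ e ∈ ltPairs (insert 0 D), g (e.2 - e.1).natAbs := by
    intro D hD
    obtain ⟨hDI, hDcard⟩ := mem_powersetCard.1 hD
    have hcard : #(insert (0 : ℤ) D) = ν + 1 := by
      rw [card_insert_of_notMem fun h => by simpa using (mem_Icc.1 (hDI h)).1, hDcard]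
    simpa only [hcard] using singSeries_pow_le_sum_ltPairs (by omega : 2 ≤ #(insert 0 D)) r
  have hH' : (0 : ℝ) < H := by exact_mod_cast hH
  refine le_of_mul_le_mul_left ?_ hH'
  calc (H : ℝ) * ∑ D ∈ (Icc (1 : ℤ) H).powersetCard ν, singSeries (insert 0 D) ^ r
      ≤ H * ∑ D ∈ (Icc (1 : ℤ) H).powersetCard ν,
          ∑ e ∈ ltPairs (insert 0 D), g (e.2 - e.1).natAbs := by
        gcongr with D hD
        exact hterm D hD
    _ ≤ 2 * H ^ ν * ∑ n ∈ Icc 1 H, g n := mul_sum_powersetCard_sum_ltPairs_insert_zero_le H hg ν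
    _ ≤ 2 * H ^ ν * (Real.exp (B * (Real.pi ^ 2 / 6)) * H) := by
        gcongr
        exact sum_prod_primeFactors_one_add_div_le (by positivity) H
    _ = H * (2 * Real.exp (B * (Real.pi ^ 2 / 6)) * H ^ ν) := by ring

theorem sum_singSeries_pow_le (ν r : ℕ) (hν : 1 ≤ ν) (hr : 1 ≤ r) :
    ∃ c : ℝ, 0 < c ∧ ∃ H₀ : ℕ, ∀ H : ℕ, H₀ ≤ H →
      ∑ D ∈ (Finset.Icc (1 : ℤ) (H : ℤ)).powersetCard ν,
          (singSeries (insert 0 D)) ^ r ≤ c * (H : ℝ) ^ ν :=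
  sum_singSeries_pow_le_general ν r hν
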